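/- arXiv:0809.1685 — 2 statements merged into one kernel-verified Lean document; each statement's English description precedes it below -/
import Mathlib

section
/- Let K be a number field and 𝔞 a nonzero fractional ideal of 𝒪_K. Then the set Red(𝔞) of reduced nonzero fractional ideals lying in the ideal class of 𝔞 (i.e., reduced fractional ideals of the form (1/μ)𝔞 with μ ∈ K^*) is finite. -/
/-!
A reduced ideal `𝔟` contains no nonzero `a` with `w a < 1` at every infinite place, so by
Minkowski's convex body theorem `2ⁿ covol(𝔟) = N(𝔟) · 2ⁿ covol(𝓞 K)` is at least the volume of
the box `{x | ∀ w, ‖x_w‖ < 1}`. Hence `N(𝔟)` is bounded below by a constant depending only on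
`K`. As `1 ∈ 𝔟`, the inverse `𝔟⁻¹` is an integral ideal, whose norm `N(𝔟)⁻¹` is thus bounded,
and there are only finitely many integral ideals of bounded norm.
-/

open NumberField
open scoped nonZeroDivisors

/-- A nonzero fractional ideal `𝔟` of the ring of integers of a number field `K` is *reduced*
if `1 ∈ 𝔟` and `1` is a minimum of `𝔟`. -/
def IsReducedIdeal {K : Type*} [Field K] [NumberField K]
    (𝔟 : FractionalIdeal (𝓞 K)⁰ K) : Prop :=
  (1 : K) ∈ 𝔟 ∧ ∀ h : K, h ∈ 𝔟 → (∀ w : InfinitePlace K, w h ≤ 1) →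
    h = 0 ∨ ∀ w : InfinitePlace K, w h = 1

open NumberField.mixedEmbedding MeasureTheory

namespace NumberField.mixedEmbedding
variable {K : Type*} [Field K] [NumberField K]

theorem minkowskiBound_eq_absNorm_mul (I : (FractionalIdeal (𝓞 K)⁰ K)ˣ) :
    minkowskiBound K I = .ofReal (FractionalIdeal.absNorm (I : FractionalIdeal (𝓞 K)⁰ K)) *
      minkowskiBound K 1 := by
  rw [minkowskiBound, minkowskiBound, volume_fundamentalDomain_fractionalIdealLatticeBasis,
    volume_fundamentalDomain_fractionalIdealLatticeBasis, Units.val_one,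
    FractionalIdeal.absNorm_one, Rat.cast_one, ENNReal.ofReal_one, one_mul, mul_assoc]

end NumberField.mixedEmbedding

namespace IsReducedIdeal
variable {K : Type*} [Field K] [NumberField K] {𝔟 : FractionalIdeal (𝓞 K)⁰ K}

theorem one_le (h : IsReducedIdeal 𝔟) : 1 ≤ 𝔟 := FractionalIdeal.one_le.mpr h.1

theorem ne_zero (h : IsReducedIdeal 𝔟) : 𝔟 ≠ 0 := 
  ne_bot_of_le_ne_bot one_ne_zero h.one_le

theorem inv_le_one (h : IsReducedIdeal 𝔟) : 𝔟⁻¹ ≤ 1 := by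
  simpa [inv_mul_cancel₀ h.ne_zero] using mul_le_mul_right h.one_le 𝔟⁻¹

theorem not_exists_lt_one (h : IsReducedIdeal 𝔟) :
    ¬ ∃ a ∈ 𝔟, a ≠ 0 ∧ ∀ w : InfinitePlace K, w a < 1 := by
  rintro ⟨a, ha, ha0, hlt⟩
  obtain ⟨w⟩ := (inferInstance : Nonempty (InfinitePlace K))
  rcases h.2 a ha fun w ↦ (hlt w).le with rfl | heq
  · exact ha0 rfl
  · exact (hlt w).ne (heq w)

theorem convexBodyLTFactor_le_minkowskiBound (h : IsReducedIdeal 𝔟) :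
    (convexBodyLTFactor K : ENNReal) ≤ minkowskiBound K (Units.mk0 𝔟 h.ne_zero) := by
  classical
  have hvol : volume (convexBodyLT K 1) = convexBodyLTFactor K := by
    simp [convexBodyLT_volume]
  rw [← hvol]
  exact not_lt.mp fun hlt ↦
    h.not_exists_lt_one (by simpa using exists_ne_zero_mem_ideal_lt K _ hlt)

theorem absNorm_inv_le (h : IsReducedIdeal 𝔟) :
    (FractionalIdeal.absNorm 𝔟⁻¹ : ℝ) ≤ (minkowskiBound K 1).toReal / convexBodyLTFactor K := by
  have hnorm : (0 : ℝ) ≤ FractionalIdeal.absNorm 𝔟 := mod_cast FractionalIdeal.absNorm_nonneg 𝔟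
  have hbound : (convexBodyLTFactor K : ℝ) ≤
      FractionalIdeal.absNorm 𝔟 * (minkowskiBound K 1).toReal := by
    have := h.convexBodyLTFactor_le_minkowskiBound
    rw [minkowskiBound_eq_absNorm_mul] at this
    simpa [ENNReal.toReal_ofReal hnorm] using
      ENNReal.toReal_mono (ENNReal.mul_ne_top ENNReal.ofReal_ne_top
        (minkowskiBound_lt_top K 1).ne) this
  have hfactor : (0 : ℝ) < convexBodyLTFactor K :=
    mod_cast pos_iff_ne_zero.mpr (convexBodyLTFactor_ne_zero K)
  rw [map_inv₀, Rat.cast_inv, le_div_iff₀ hfactor, inv_mul_le_iff₀ (hnorm.lt_of_ne' ?_)]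
  · exact hbound
  · exact_mod_cast FractionalIdeal.absNorm_eq_zero_iff.not.mpr h.ne_zero

end IsReducedIdeal

theorem finite_setOf_isReducedIdeal {K : Type*} [Field K] [NumberField K] :
    {𝔟 : FractionalIdeal (𝓞 K)⁰ K | IsReducedIdeal 𝔟}.Finite := by
  refine ((Ideal.finite_setOfPred_absNorm_le
    ⌊(minkowskiBound K 1).toReal / convexBodyLTFactor K⌋₊).image
      fun J : Ideal (𝓞 K) ↦ (J : FractionalIdeal (𝓞 K)⁰ K)⁻¹).subset ?_
  intro 𝔟 h𝔟
  obtain ⟨J, hJ⟩ := FractionalIdeal.le_one_iff_exists_coeIdeal.mp h𝔟.inv_le_one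
  refine ⟨J, Nat.le_floor ?_, inv_eq_iff_eq_inv.mpr hJ⟩
  have := h𝔟.absNorm_inv_le
  rwa [← hJ, FractionalIdeal.coeIdeal_absNorm, Rat.cast_natCast] at this

theorem stmt9_general {K : Type*} [Field K] [NumberField K]
    (𝔞 : FractionalIdeal (𝓞 K)⁰ K) :
    {𝔟 : FractionalIdeal (𝓞 K)⁰ K |
      (∃ μ : K, μ ≠ 0 ∧ 𝔟 = FractionalIdeal.spanSingleton (𝓞 K)⁰ μ⁻¹ * 𝔞) ∧
      IsReducedIdeal 𝔟}.Finite :=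
  finite_setOf_isReducedIdeal.subset fun _ h𝔟 ↦ h𝔟.2

/-- Let `K` be a number field and `𝔞` a nonzero fractional ideal of `𝒪_K`.
Then the set `Red(𝔞)` of reduced fractional ideals in the ideal class of `𝔞`, i.e. of the
form `(1/μ)𝔞` with `μ ∈ K^*`, is finite. -/
theorem stmt9 {K : Type*} [Field K] [NumberField K]
    (𝔞 : FractionalIdeal (𝓞 K)⁰ K) (h𝔞 : 𝔞 ≠ 0) :
    {𝔟 : FractionalIdeal (𝓞 K)⁰ K |
      (∃ μ : K, μ ≠ 0 ∧ 𝔟 = FractionalIdeal.spanSingleton (𝓞 K)⁰ μ⁻¹ * 𝔞) ∧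
      IsReducedIdeal 𝔟}.Finite :=
  stmt9_general 𝔞
end

section
/- Let K be a number field, 𝔟 a nonzero fractional ideal of 𝒪_K, and t = (t₁, …, tₙ) ∈ ℝⁿ. Then: (i) there exists ℓ* ∈ ℝ such that B(𝔟, (t, ℓ*)) ∖ {0} is nonempty and B(𝔟, (t, ℓ)) ∖ {0} is empty for every ℓ < ℓ*; (ii) B(𝔟, (t, ℓ*)) ∖ {0} contains an element that is smallest with respect to the preorder ≼; (iii) for any μ ∈ B(𝔟, (t, ℓ*)) ∖ {0} that is smallest with respect to ≼, the pair ((1/μ)𝔟, (t₁ − log w₁(μ), …, tₙ − log wₙ(μ))) is an f-representation. -/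
open NumberField
open scoped nonZeroDivisors

/-- Lexicographic comparison of real tuples: `a ≤ₗₑₓ b`. -/
def lexLe {m : ℕ} (a b : Fin m → ℝ) : Prop :=
  a = b ∨ ∃ i : Fin m, a i < b i ∧ ∀ j : Fin m, j < i → a j = b j

/-- The vector of absolute values of `h` at the infinite places, the distinguished place `w₀`
first. -/
def absVec {K : Type*} [Field K] [NumberField K] {n : ℕ}
    (w₀ : InfinitePlace K) (w : Fin n → InfinitePlace K) (h : K) : Fin (n + 1) → ℝ :=
  Fin.cons (w₀ h) (fun i => w i h)

/-- The total preorder `≼` on `K^*`: `h ≼ h'` iff the vector of absolute values of `h` is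
lexicographically at most that of `h'` (distinguished place first). -/
def preceq {K : Type*} [Field K] [NumberField K] {n : ℕ}
    (w₀ : InfinitePlace K) (w : Fin n → InfinitePlace K) (h h' : K) : Prop :=
  lexLe (absVec w₀ w h) (absVec w₀ w h')

/-- The box `B(𝔟, (t, ℓ)) = {h ∈ 𝔟 : w₀(h) ≤ exp ℓ and wᵢ(h) ≤ exp tᵢ for 1 ≤ i ≤ n}`. -/
def box {K : Type*} [Field K] [NumberField K] {n : ℕ}
    (w₀ : InfinitePlace K) (w : Fin n → InfinitePlace K)
    (𝔟 : FractionalIdeal (𝓞 K)⁰ K) (t : Fin n → ℝ) (ℓ : ℝ) : Set K :=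
  {h : K | h ∈ 𝔟 ∧ w₀ h ≤ Real.exp ℓ ∧ ∀ i : Fin n, w i h ≤ Real.exp (t i)}

/-- A pair `(𝔟, t)` is an *f-representation* if `1 ∈ B(𝔟, (t, 0))` and `1` is a smallest
element of `B(𝔟, (t, 0)) ∖ {0}` with respect to `≼`. -/
def IsFRep {K : Type*} [Field K] [NumberField K] {n : ℕ}
    (w₀ : InfinitePlace K) (w : Fin n → InfinitePlace K)
    (𝔟 : FractionalIdeal (𝓞 K)⁰ K) (t : Fin n → ℝ) : Prop :=
  (1 : K) ∈ box w₀ w 𝔟 t 0 ∧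
  ∀ h ∈ box w₀ w 𝔟 t 0, h ≠ 0 → preceq w₀ w 1 h

/-!
Minkowski's theorem gives a nonzero element of `𝔟` that is small at every place except `w₀`, so
some box `B(𝔟, (t, ℓ))` contains a nonzero element. Boxes are finite (after clearing the
denominator of `𝔟` they consist of algebraic integers of bounded house), so `w₀` attains a
minimum `exp ℓ*` on the nonzero elements of such a box, and the lexicographic order `≼` attains
a minimum on the finite set `B(𝔟, (t, ℓ*)) ∖ {0}`. Finally, multiplication by `μ` maps
`B(μ⁻¹𝔟, (t - log w(μ), 0))` into `B(𝔟, (t, ℓ*))` and `≼` is invariant under it, so `1` is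
`≼`-least in the rescaled box.
-/

open InfinitePlace

theorem lexLe_iff_toLex_le {m : ℕ} {a b : Fin m → ℝ} : lexLe a b ↔ toLex a ≤ toLex b := by
  rw [le_iff_lt_or_eq, toLex_inj, or_comm, lexLe]
  exact or_congr_right ⟨fun ⟨i, hi, hj⟩ => ⟨i, hj, hi⟩, fun ⟨i, hj, hi⟩ => ⟨i, hi, hj⟩⟩

theorem lexLe_mul_left_iff {m : ℕ} {v a b : Fin m → ℝ} (hv : ∀ j, 0 < v j) :
    lexLe (v * a) (v * b) ↔ lexLe a b := by
  simp only [lexLe, funext_iff, Pi.mul_apply, mul_right_inj' (hv _).ne',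
    mul_lt_mul_iff_right₀ (hv _)]

section Places

variable {K : Type*} [Field K] [NumberField K]

theorem FractionalIdeal.finite_setOf_forall_place_le (I : FractionalIdeal (𝓞 K)⁰ K) (B : ℝ) :
    {x : K | x ∈ I ∧ ∀ v : InfinitePlace K, v x ≤ B}.Finite := by
  obtain ⟨d, hd, hdI⟩ := I.2
  have hd0 : (d : K) ≠ 0 := RingOfIntegers.coe_ne_zero_iff.mpr (nonZeroDivisors.ne_zero hd)
  set D : ℝ := ∑ v : InfinitePlace K, v (d : K)
  have hvD : ∀ v : InfinitePlace K, v (d : K) ≤ D := fun v =>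
    Finset.single_le_sum (f := fun v : InfinitePlace K => v (d : K)) (fun v _ => by positivity)
      (Finset.mem_univ v)
  refine ((Embeddings.finite_of_norm_le K ℂ (D * B)).preimage
    (mul_right_injective₀ hd0).injOn).subset fun x ⟨hxI, hxB⟩ => ⟨?_, fun φ => ?_⟩
  · obtain ⟨y, hy⟩ := hdI x hxI
    rw [Algebra.smul_def] at hy
    simpa only [← hy] using RingOfIntegers.isIntegral_coe y
  · rw [← InfinitePlace.apply, map_mul]
    exact mul_le_mul (hvD _) (hxB _) (by positivity) ((apply_nonneg _ _).trans (hvD (mk φ)))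

open mixedEmbedding in
theorem FractionalIdeal.exists_ne_zero_mem_forall_place_lt {I : FractionalIdeal (𝓞 K)⁰ K}
    (hI : I ≠ 0) (w₀ : InfinitePlace K) {f : InfinitePlace K → NNReal}
    (hf : ∀ w, w ≠ w₀ → f w ≠ 0) :
    ∃ a ∈ I, a ≠ 0 ∧ ∀ w, w ≠ w₀ → w a < f w := by
  obtain ⟨B, hB⟩ : ∃ B : ℕ, minkowskiBound K (Units.mk0 I hI) < convexBodyLTFactor K * B := by
    simp_rw [mul_comm (convexBodyLTFactor K : ENNReal)]
    exact ENNReal.exists_nat_mul_gt (ENNReal.coe_ne_zero.mpr (convexBodyLTFactor_ne_zero K))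
      (minkowskiBound_lt_top K _).ne
  -- Only the value at `w₀` is changed, to make the volume of the convex body exceed the bound.
  obtain ⟨g, hgf, hg⟩ := adjust_f K B hf
  obtain ⟨a, ha, ha0, hag⟩ := exists_ne_zero_mem_ideal_lt K (Units.mk0 I hI) (f := g)
    (by rwa [convexBodyLT_volume, hg])
  exact ⟨a, ha, ha0, fun w hw => hgf w hw ▸ hag w⟩

end Places

section Box

variable {K : Type*} [Field K] [NumberField K] {n : ℕ}
  (w₀ : InfinitePlace K) (w : Fin n → InfinitePlace K)

theorem absVec_mul (x y : K) : absVec w₀ w (x * y) = absVec w₀ w x * absVec w₀ w y := by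
  ext j
  refine Fin.cases ?_ (fun i => ?_) j <;> simp [absVec]

theorem absVec_pos {x : K} (hx : x ≠ 0) (j : Fin (n + 1)) : 0 < absVec w₀ w x j := by
  refine Fin.cases ?_ (fun i => ?_) j <;> simp [absVec, pos_iff, hx]

theorem preceq_mul_left_iff {x : K} (hx : x ≠ 0) {y z : K} :
    preceq w₀ w (x * y) (x * z) ↔ preceq w₀ w y z := by
  rw [preceq, preceq, absVec_mul, absVec_mul, lexLe_mul_left_iff (absVec_pos w₀ w hx)]

theorem Set.Finite.exists_forall_preceq {s : Set K} (hs : s.Finite) (hne : s.Nonempty) :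
    ∃ μ ∈ s, ∀ h ∈ s, preceq w₀ w μ h := by
  obtain ⟨μ, hμ, hmin⟩ := Set.exists_min_image s (fun h => toLex (absVec w₀ w h)) hs hne
  exact ⟨μ, hμ, fun h hh => lexLe_iff_toLex_le.mpr (hmin h hh)⟩

variable {w₀ w} {𝔟 : FractionalIdeal (𝓞 K)⁰ K} {t : Fin n → ℝ}

theorem box_mono : Monotone (box w₀ w 𝔟 t) :=
  fun _ _ hℓ _ ⟨h𝔟, h₀, hi⟩ => ⟨h𝔟, h₀.trans (Real.exp_le_exp.mpr hℓ), hi⟩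

theorem mem_box_log_iff {μ : K} (hμ : μ ≠ 0) :
    μ ∈ box w₀ w 𝔟 t (Real.log (w₀ μ)) ↔ μ ∈ 𝔟 ∧ ∀ i, w i μ ≤ Real.exp (t i) := by
  simp only [box, Set.mem_ofPred_eq, Real.exp_log (pos_iff.mpr hμ), le_refl, true_and]

variable (w₀ w 𝔟 t) in
theorem box_finite (hw : Function.Surjective (Fin.cons w₀ w : Fin (n + 1) → InfinitePlace K))
    (ℓ : ℝ) : (box w₀ w 𝔟 t ℓ).Finite := by
  have hsum : ∀ i, Real.exp (t i) ≤ ∑ i, Real.exp (t i) := fun i =>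
    Finset.single_le_sum (fun i _ => (Real.exp_pos (t i)).le) (Finset.mem_univ i)
  refine (𝔟.finite_setOf_forall_place_le (Real.exp ℓ + ∑ i, Real.exp (t i))).subset
    fun h ⟨h𝔟, h₀, hi⟩ => ⟨h𝔟, fun v => ?_⟩
  obtain ⟨j, rfl⟩ := hw v
  induction j using Fin.cases with
  | zero =>
    exact le_add_of_le_of_nonneg h₀ (Finset.sum_nonneg fun i _ => (Real.exp_pos (t i)).le)
  | succ i => exact le_add_of_nonneg_of_le (Real.exp_pos ℓ).le ((hi i).trans (hsum i))

theorem exists_box_diff_zero_nonempty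
    (hw : Function.Injective (Fin.cons w₀ w : Fin (n + 1) → InfinitePlace K)) (h𝔟 : 𝔟 ≠ 0) :
    ∃ ℓ, (box w₀ w 𝔟 t ℓ \ {0}).Nonempty := by
  have hw₀ : ∀ i, w i ≠ w₀ := fun i hi =>
    Fin.succ_ne_zero i (hw (by simpa only [Fin.cons_succ, Fin.cons_zero] using hi))
  set c := -∑ i, |t i|
  have hct : ∀ i, c ≤ t i := fun i => (neg_le_neg (Finset.single_le_sum
    (fun i _ => abs_nonneg (t i)) (Finset.mem_univ i))).trans (neg_abs_le (t i))
  obtain ⟨a, ha, ha0, hac⟩ := FractionalIdeal.exists_ne_zero_mem_forall_place_lt h𝔟 w₀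
    (f := fun _ => (Real.exp c).toNNReal) fun _ _ => (Real.toNNReal_pos.mpr (Real.exp_pos c)).ne'
  refine ⟨Real.log (w₀ a), a, (mem_box_log_iff ha0).mpr ⟨ha, fun i => ?_⟩, ha0⟩
  have := hac (w i) (hw₀ i)
  rw [Real.coe_toNNReal _ (Real.exp_pos c).le] at this
  exact this.le.trans (Real.exp_le_exp.mpr (hct i))

theorem exists_least_nonempty_level (hfin : ∀ ℓ, (box w₀ w 𝔟 t ℓ).Finite)
    (hne : ∃ ℓ, (box w₀ w 𝔟 t ℓ \ {0}).Nonempty) :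
    ∃ ℓstar, (box w₀ w 𝔟 t ℓstar \ {0}).Nonempty ∧
      ∀ ℓ < ℓstar, box w₀ w 𝔟 t ℓ \ {0} = ∅ := by
  obtain ⟨ℓ₀, hne₀⟩ := hne
  obtain ⟨μ, ⟨hμ, hμ0⟩, hmin⟩ := Set.exists_min_image _ (fun h => w₀ h) (hfin ℓ₀).sdiff hne₀
  refine ⟨Real.log (w₀ μ), ⟨μ, (mem_box_log_iff hμ0).mpr ⟨hμ.1, hμ.2.2⟩, hμ0⟩, fun ℓ hℓ => ?_⟩
  refine Set.eq_empty_of_forall_notMem fun h ⟨hh, hh0⟩ => ?_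
  have hlt : w₀ h < w₀ μ :=
    hh.2.1.trans_lt ((Real.lt_log_iff_exp_lt (pos_iff.mpr hμ0)).mp hℓ)
  exact (hmin h ⟨⟨hh.1, hlt.le.trans hμ.2.1, hh.2.2⟩, hh0⟩).not_gt hlt

theorem mem_box_rescale_iff {μ h : K} (hμ : μ ≠ 0) (ℓ : ℝ) :
    h ∈ box w₀ w (FractionalIdeal.spanSingleton (𝓞 K)⁰ μ⁻¹ * 𝔟)
        (fun i => t i - Real.log (w i μ)) ℓ ↔
      μ * h ∈ box w₀ w 𝔟 t (ℓ + Real.log (w₀ μ)) := by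
  have hpos : ∀ v : InfinitePlace K, 0 < v μ := fun v => pos_iff.mpr hμ
  have hmem : h ∈ FractionalIdeal.spanSingleton (𝓞 K)⁰ μ⁻¹ * 𝔟 ↔ μ * h ∈ 𝔟 := by
    rw [FractionalIdeal.mem_singleton_mul]
    constructor
    · rintro ⟨y, hy, rfl⟩
      rwa [mul_inv_cancel_left₀ hμ]
    · exact fun hμh => ⟨μ * h, hμh, (inv_mul_cancel_left₀ hμ h).symm⟩
  refine and_congr hmem (and_congr ?_ (forall_congr' fun i => ?_))
  · rw [map_mul, Real.exp_add, Real.exp_log (hpos w₀), mul_comm (Real.exp ℓ),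
      mul_le_mul_iff_right₀ (hpos w₀)]
  · rw [map_mul, Real.exp_sub, Real.exp_log (hpos (w i)), le_div_iff₀ (hpos (w i)), mul_comm]

theorem isFRep_of_forall_preceq {μ : K} {ℓ : ℝ} (hμ : μ ∈ box w₀ w 𝔟 t ℓ \ {0})
    (hmin : ∀ h ∈ box w₀ w 𝔟 t ℓ \ {0}, preceq w₀ w μ h) :
    IsFRep w₀ w (FractionalIdeal.spanSingleton (𝓞 K)⁰ μ⁻¹ * 𝔟)
      (fun i => t i - Real.log (w i μ)) := by
  obtain ⟨hμ, hμ0 : μ ≠ 0⟩ := hμ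
  refine ⟨(mem_box_rescale_iff hμ0 0).mpr ?_, fun h hh hh0 => ?_⟩
  · rw [mul_one, zero_add]
    exact (mem_box_log_iff hμ0).mpr ⟨hμ.1, hμ.2.2⟩
  · have hlog : 0 + Real.log (w₀ μ) ≤ ℓ := by
      rw [zero_add, Real.log_le_iff_le_exp (pos_iff.mpr hμ0)]
      exact hμ.2.1
    have hμh := box_mono hlog ((mem_box_rescale_iff hμ0 0).mp hh)
    rw [← preceq_mul_left_iff w₀ w hμ0, mul_one]
    exact hmin _ ⟨hμh, mul_ne_zero hμ0 hh0⟩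

end Box

/-- **Reduction.** Let `K` be a number field with infinite places enumerated as
`w₀, w₁, …, wₙ`, `𝔟` a nonzero fractional ideal of `𝒪_K`, and `t ∈ ℝⁿ`. Then: (i) there is a
smallest `ℓ*` with `B(𝔟, (t, ℓ*)) ∖ {0}` nonempty; (ii) this set has a `≼`-smallest element;
(iii) for any `≼`-smallest `μ` of this set, `((1/μ)𝔟, (tᵢ − log wᵢ(μ))ᵢ)` is an
f-representation. -/
theorem stmt12 {K : Type*} [Field K] [NumberField K] {n : ℕ}
    (w₀ : InfinitePlace K) (w : Fin n → InfinitePlace K)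
    (hw : Function.Bijective (Fin.cons w₀ w : Fin (n + 1) → InfinitePlace K))
    (𝔟 : FractionalIdeal (𝓞 K)⁰ K) (h𝔟 : 𝔟 ≠ 0) (t : Fin n → ℝ) :
    ∃ ℓstar : ℝ,
      (box w₀ w 𝔟 t ℓstar \ {0}).Nonempty ∧
      (∀ ℓ : ℝ, ℓ < ℓstar → box w₀ w 𝔟 t ℓ \ {0} = ∅) ∧
      (∃ μ ∈ box w₀ w 𝔟 t ℓstar \ {0},
        ∀ h ∈ box w₀ w 𝔟 t ℓstar \ {0}, preceq w₀ w μ h) ∧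
      ∀ μ ∈ box w₀ w 𝔟 t ℓstar \ {0},
        (∀ h ∈ box w₀ w 𝔟 t ℓstar \ {0}, preceq w₀ w μ h) →
        IsFRep w₀ w (FractionalIdeal.spanSingleton (𝓞 K)⁰ μ⁻¹ * 𝔟)
          (fun i => t i - Real.log (w i μ)) := by
  have hfin := box_finite w₀ w 𝔟 t hw.surjective
  obtain ⟨ℓstar, hne, hempty⟩ :=
    exists_least_nonempty_level hfin (exists_box_diff_zero_nonempty hw.injective h𝔟)
  exact ⟨ℓstar, hne, hempty, (hfin ℓstar).sdiff.exists_forall_preceq w₀ w hne,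
    fun μ hμ hmin => isFRep_of_forall_preceq hμ hmin⟩
end
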